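/- arXiv:1502.00605 — 5 statements merged into one kernel-verified Lean document; each statement's English description precedes it below -/
import Mathlib

section
/- Define integer sequences by x₀ = 4, x₁ = 4936, xₘ = 1298·xₘ₋₁ − xₘ₋₂ and y₀ = 1, y₁ = 1369, yₘ = 1298·yₘ₋₁ − yₘ₋₂. Then for all m ≥ 0, xₘ² − 13·yₘ² = 3. -/
/-!
Put `ε = 649 + 180√13`, a unit of `ℤ[√13]` (its norm is `649² - 13·180² = 1`) with trace
`1298`, so `ε² = 1298 ε - 1`. Hence `m ↦ (4 + √13) εᵐ` obeys the recurrence, and it has the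
initial values `x₀ + y₀√13` and `x₁ + y₁√13`; so `xₘ + yₘ√13 = (4 + √13) εᵐ` and the
norm `xₘ² - 13 yₘ²` is `N(4 + √13) · N(ε)ᵐ = 3`.
-/

def SolvesRecurrence {R : Type*} [Ring R] (t : R) (u : ℕ → R) : Prop :=
  ∀ m, u (m + 2) = t * u (m + 1) - u m

theorem SolvesRecurrence.eq_of_initial_eq {R : Type*} [Ring R] {t : R} {u v : ℕ → R}
    (hu : SolvesRecurrence t u) (hv : SolvesRecurrence t v) (h0 : u 0 = v 0)
    (h1 : u 1 = v 1) : u = v := by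
  funext m
  induction m using Nat.twoStepInduction with
  | zero => exact h0
  | one => exact h1
  | more m ihm ihm1 => rw [hu, hv, ihm, ihm1]

theorem solvesRecurrence_mul_pow {R : Type*} [CommRing R] {t ε : R} (hε : ε ^ 2 = t * ε - 1)
    (c : R) : SolvesRecurrence t fun m => c * ε ^ m := by
  intro m
  linear_combination c * ε ^ m * hε

theorem Zsqrtd.norm_pow {d : ℤ} (z : ℤ√d) (n : ℕ) : (z ^ n).norm = z.norm ^ n :=
  map_pow Zsqrtd.normMonoidHom z n

theorem stmt7 (x y : ℕ → ℤ)
    (hx0 : x 0 = 4) (hx1 : x 1 = 4936)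
    (hxr : ∀ m, x (m + 2) = 1298 * x (m + 1) - x m)
    (hy0 : y 0 = 1) (hy1 : y 1 = 1369)
    (hyr : ∀ m, y (m + 2) = 1298 * y (m + 1) - y m) :
    ∀ m, (x m) ^ 2 - 13 * (y m) ^ 2 = 3 := by
  set ε : ℤ√13 := ⟨649, 180⟩
  have hε : ε ^ 2 = 1298 * ε - 1 := by ext <;> simp [ε, sq]
  have hz : SolvesRecurrence (1298 : ℤ√13) fun m => ⟨x m, y m⟩ := by
    intro m
    ext <;> simp [hxr, hyr]
  have hxy : (fun m => (⟨x m, y m⟩ : ℤ√13)) = fun m => ⟨4, 1⟩ * ε ^ m :=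
    hz.eq_of_initial_eq (solvesRecurrence_mul_pow hε _)
      (by ext <;> simp [hx0, hy0]) (by ext <;> simp [ε, hx1, hy1])
  have hnormε : ε.norm = 1 := rfl
  intro m
  have hnorm := congrArg Zsqrtd.norm (congrFun hxy m)
  rw [Zsqrtd.norm_mul, Zsqrtd.norm_pow, hnormε, one_pow, mul_one, Zsqrtd.norm_def,
    Zsqrtd.norm_def] at hnorm
  linear_combination hnorm
end

section
/- Let a be a positive integer divisible by 16 with a ≥ 2, and suppose 4a² − 3 = 13y² for some integer y. Set n = 4a³ − 3a − 1. Then sfp(n) ≤ a − 1, sfp(n + 1) ≤ 13a/16, and sfp(n + 2) ≤ a + 1; in particular max{sfp(n), sfp(n+1), sfp(n+2)} ≤ a + 1. -/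
/-!
With `T₃(a) = 4a³ - 3a` the numbers are `T₃(a) - 1 = (a - 1)(2a + 1)²`, `T₃(a) + 1 = (a + 1)(2a - 1)²`
and, in the middle, `T₃(a) = a(4a² - 3) = 13a y² = 13 (a / 16) (4y)²`. Each exhibits a squarefree-part
candidate, and `sfp` is at most any such candidate.
-/

/-- The squarefree part of `n`: the smallest positive integer `a` such that
`a ∣ n` and `n / a` is a perfect square. -/
noncomputable def sfp (n : ℕ) : ℕ := sInf {a : ℕ | 0 < a ∧ a ∣ n ∧ ∃ m : ℕ, n = a * m ^ 2}

lemma sfp_le_of_eq_mul_sq {n d : ℕ} (hd : 0 < d) (m : ℕ) (h : n = d * m ^ 2) : sfp n ≤ d :=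
  Nat.sInf_le ⟨hd, ⟨m ^ 2, h⟩, m, h⟩

lemma sfp_le_of_intCast_eq_mul_sq {n d : ℕ} (hd : 0 < d) (m : ℤ) (h : (n : ℤ) = d * m ^ 2) :
    sfp n ≤ d :=
  sfp_le_of_eq_mul_sq hd m.natAbs <| by
    have : (n : ℤ) = ((d * m.natAbs ^ 2 : ℕ) : ℤ) := by push_cast; rw [sq_abs, h]
    exact_mod_cast this

lemma intCast_four_mul_pow_three_sub {a : ℕ} (ha : 0 < a) :
    ((4 * a ^ 3 - 3 * a - 1 : ℕ) : ℤ) = 4 * (a : ℤ) ^ 3 - 3 * a - 1 := by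
  have : 3 * a + 1 ≤ 4 * a ^ 3 := by
    have := Nat.le_self_pow (by norm_num : 3 ≠ 0) a
    omega
  push_cast [Nat.sub_sub, Nat.cast_sub this]
  ring

theorem stmt9_general (a : ℕ) (h16 : 16 ∣ a) (y : ℤ)
    (hy : 4 * (a : ℤ) ^ 2 - 3 = 13 * y ^ 2)
    (n : ℕ) (hn : n = 4 * a ^ 3 - 3 * a - 1) :
    sfp n ≤ a - 1 ∧ sfp (n + 1) ≤ 13 * a / 16 ∧ sfp (n + 2) ≤ a + 1 ∧
    max (sfp n) (max (sfp (n + 1)) (sfp (n + 2))) ≤ a + 1 := by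
  obtain ⟨b, rfl⟩ := h16
  have hb : 0 < b := Nat.pos_of_ne_zero fun hb => by
    subst hb; norm_num at hy; nlinarith [sq_nonneg y]
  have hN : (n : ℤ) = 4 * ((16 * b : ℕ) : ℤ) ^ 3 - 3 * (16 * b : ℕ) - 1 := by
    rw [hn, intCast_four_mul_pow_three_sub (by omega)]
  have s1 : sfp n ≤ 16 * b - 1 :=
    sfp_le_of_intCast_eq_mul_sq (by omega) (2 * (16 * b : ℕ) + 1) <| by
      push_cast [Nat.cast_sub (show 1 ≤ 16 * b by omega)] at hN ⊢; rw [hN]; ring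
  have s2 : sfp (n + 1) ≤ 13 * b :=
    sfp_le_of_intCast_eq_mul_sq (by omega) (4 * y) <| by
      push_cast at hN hy ⊢; linear_combination hN + 16 * (b : ℤ) * hy
  have s3 : sfp (n + 2) ≤ 16 * b + 1 :=
    sfp_le_of_intCast_eq_mul_sq (by omega) (2 * (16 * b : ℕ) - 1) <| by
      push_cast at hN ⊢; rw [hN]; ring
  refine ⟨s1, by omega, s3, ?_⟩
  simp only [max_le_iff]
  omega

theorem stmt9 (a : ℕ) (h16 : 16 ∣ a) (ha : 2 ≤ a) (y : ℤ)
    (hy : 4 * (a : ℤ) ^ 2 - 3 = 13 * y ^ 2)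
    (n : ℕ) (hn : n = 4 * a ^ 3 - 3 * a - 1) :
    sfp n ≤ a - 1 ∧ sfp (n + 1) ≤ 13 * a / 16 ∧ sfp (n + 2) ≤ a + 1 ∧
    max (sfp n) (max (sfp (n + 1)) (sfp (n + 2))) ≤ a + 1 :=
  stmt9_general a h16 y hy n hn
end

section
/- Suppose positive integers n, a, b, c, x, y, z satisfy n = a·x², n + 1 = b·y², n + 2 = c·z². Let E be the elliptic curve Y² = X³ − (abc)²·X. Then the point (X, Y) = ((n+1)·abc, (abc)²·x·y·z) lies on E and has integer coordinates with Y ≠ 0. -/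
/-!
Since `(n + 1)³ - (n + 1) = n (n + 1) (n + 2) = abc · (xyz)²`, the point `(n + 1, xyz)` lies on the
quadratic twist `abc · Y² = X³ - X`; scaling by `d = abc` moves it to `Y² = X³ - d² X`.
-/

theorem sq_eq_cube_sub_of_consecutive_mul_sq {R : Type*} [CommRing R] {n a b c x y z : R}
    (h1 : n = a * x ^ 2) (h2 : n + 1 = b * y ^ 2) (h3 : n + 2 = c * z ^ 2) :
    ((a * b * c) ^ 2 * x * y * z) ^ 2 =
      ((n + 1) * (a * b * c)) ^ 3 - (a * b * c) ^ 2 * ((n + 1) * (a * b * c)) :=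
  calc ((a * b * c) ^ 2 * x * y * z) ^ 2
      = (a * b * c) * ((a * x ^ 2) * (b * y ^ 2) * (c * z ^ 2)) * (a * b * c) ^ 2 := by ring
    _ = (a * b * c) * (n * (n + 1) * (n + 2)) * (a * b * c) ^ 2 := by rw [← h1, ← h2, ← h3]
    _ = ((n + 1) * (a * b * c)) ^ 3 - (a * b * c) ^ 2 * ((n + 1) * (a * b * c)) := by ring

theorem stmt13_general (n a b c x y z : ℕ)
    (ha : 0 < a) (hb : 0 < b) (hc : 0 < c)
    (hx : 0 < x) (hy : 0 < y) (hz : 0 < z)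
    (h1 : n = a * x ^ 2) (h2 : n + 1 = b * y ^ 2) (h3 : n + 2 = c * z ^ 2) :
    (((a : ℤ) * b * c) ^ 2 * x * y * z) ^ 2 =
      (((n : ℤ) + 1) * ((a : ℤ) * b * c)) ^ 3 -
        ((a : ℤ) * b * c) ^ 2 * (((n : ℤ) + 1) * ((a : ℤ) * b * c)) ∧
    ((a : ℤ) * b * c) ^ 2 * x * y * z ≠ 0 :=
  ⟨sq_eq_cube_sub_of_consecutive_mul_sq (by exact_mod_cast h1) (by exact_mod_cast h2)
    (by exact_mod_cast h3), by positivity⟩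

theorem stmt13 (n a b c x y z : ℕ)
    (hn : 0 < n) (ha : 0 < a) (hb : 0 < b) (hc : 0 < c)
    (hx : 0 < x) (hy : 0 < y) (hz : 0 < z)
    (h1 : n = a * x ^ 2) (h2 : n + 1 = b * y ^ 2) (h3 : n + 2 = c * z ^ 2) :
    (((a : ℤ) * b * c) ^ 2 * x * y * z) ^ 2 =
      (((n : ℤ) + 1) * ((a : ℤ) * b * c)) ^ 3 -
        ((a : ℤ) * b * c) ^ 2 * (((n : ℤ) + 1) * ((a : ℤ) * b * c)) ∧
    ((a : ℤ) * b * c) ^ 2 * x * y * z ≠ 0 :=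
  stmt13_general n a b c x y z ha hb hc hx hy hz h1 h2 h3
end

section
/- Suppose positive integers n, x, y, z satisfy n = 3x², n + 1 = y², n + 2 = 2z². Then n = 48. -/
/-!
Writing `y = 2k + 1` and `x = 2a`, the equations become `k (k + 1) = 3 a²` and
`k² + (k + 1)² = z²`. As `k` and `k + 1` are coprime, one is a square and the other three times a
square, and `k + 1 = 3 s²` is impossible modulo 3; so `k + 1 = v²`. The primitive Pythagorean
triple `(k, k + 1, z)` then gives `t⁴ = 2 n² + 1` when `k` is even, forcing `n = 0`, and
`X² = 8 r⁴ + 1` when `k` is odd. Splitting `(X - 1)(X + 1) / 4 = 2 r⁴` into coprime factors gives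
either `c⁴ = 2 (d²)² + 1`, settled as before, or `c⁴ + 1 = 2 d⁴`. The latter means
`(d²)⁴ - c⁴ = ((c⁴ - 1) / 2)²`, and Fermat's right triangle theorem (`a⁴ - b⁴ = c²` has no
solution with `b c ≠ 0`, by infinite descent) leaves only `c = 1`. Hence `k = 0` or `k = 3`.
-/

namespace Nat

theorem sq_mod_four (n : ℕ) : n ^ 2 % 4 = n % 2 := by
  rcases even_or_odd' n with ⟨t, rfl | rfl⟩ <;> ring_nf <;> omega

theorem coprime_of_mul_eq_mul_add_one {a b c d : ℕ} (h : a * c = b * d + 1) : Coprime a b :=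
  eq_one_of_dvd_one <| (Nat.dvd_add_right ((gcd_dvd_right a b).mul_right d)).mp
    (h ▸ (gcd_dvd_left a b).mul_right c)

theorem coprime_self_add_one (k : ℕ) : Coprime k (k + 1) :=
  coprime_self_add_right.mpr (coprime_one_right k)

theorem eq_zero_of_sq_add_one_eq_sq {p q : ℕ} (h : p ^ 2 + 1 = q ^ 2) : p = 0 := by
  have hpq : p < q := by
    by_contra! hle
    nlinarith [Nat.pow_le_pow_left hle 2]
  nlinarith

theorem Coprime.exists_eq_pow_of_mul_eq_pow {a b c k : ℕ} (hab : Coprime a b)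
    (h : a * b = c ^ k) : ∃ d, a = d ^ k :=
  _root_.exists_eq_pow_of_mul_eq_pow (Nat.isUnit_iff.mpr hab) h

theorem Coprime.exists_pow_of_mul_eq_prime_mul_pow {p m n a k : ℕ} (hp : p.Prime)
    (hmn : Coprime m n) (h : m * n = p * a ^ k) :
    (∃ r s, m = p * r ^ k ∧ n = s ^ k) ∨ ∃ r s, m = r ^ k ∧ n = p * s ^ k := by
  rcases (Nat.Prime.dvd_mul hp).mp (Dvd.intro _ h.symm) with ⟨m', rfl⟩ | ⟨n', rfl⟩
  · have h' : m' * n = a ^ k := by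
      rw [mul_assoc] at h; exact Nat.eq_of_mul_eq_mul_left hp.pos h
    have hm'n : Coprime m' n := hmn.coprime_mul_left
    obtain ⟨r, hr⟩ := hm'n.exists_eq_pow_of_mul_eq_pow h'
    obtain ⟨s, hs⟩ := hm'n.symm.exists_eq_pow_of_mul_eq_pow ((mul_comm _ _).trans h')
    exact Or.inl ⟨r, s, hr ▸ rfl, hs⟩
  · have h' : m * n' = a ^ k := by
      rw [mul_left_comm] at h; exact Nat.eq_of_mul_eq_mul_left hp.pos h
    have hmn' : Coprime m n' := hmn.coprime_mul_left_right
    obtain ⟨r, hr⟩ := hmn'.exists_eq_pow_of_mul_eq_pow h'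
    obtain ⟨s, hs⟩ := hmn'.symm.exists_eq_pow_of_mul_eq_pow ((mul_comm _ _).trans h')
    exact Or.inr ⟨r, s, hr, hs ▸ rfl⟩

theorem pythagorean_coprime_classification {a b c : ℕ} (h : a ^ 2 + b ^ 2 = c ^ 2)
    (hab : Coprime a b) (ha : Odd a) :
    ∃ m n, a + n ^ 2 = m ^ 2 ∧ b = 2 * m * n ∧ c = m ^ 2 + n ^ 2 ∧ Coprime m n := by
  have hT : PythagoreanTriple (a : ℤ) b c := by
    unfold PythagoreanTriple; simp only [← sq]; exact_mod_cast h
  have hc : (0 : ℤ) < c := by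
    have : c ≠ 0 := by rintro rfl; simp_all
    positivity
  obtain ⟨m, n, hm, hn, hc, hmn, -⟩ := hT.coprime_classification'
    (by rwa [Int.gcd_natCast_natCast]) (by exact_mod_cast Nat.odd_iff.mp ha) hc
  refine ⟨m.natAbs, n.natAbs, ?_, ?_, ?_, hmn⟩
  · zify; rw [sq_abs, sq_abs]; linarith
  · simpa [Int.natAbs_mul] using congrArg Int.natAbs hn
  · zify; rw [sq_abs, sq_abs]; linarith

end Nat

open Nat

def FermatRightTriangle (a b c : ℕ) : Prop :=
  b ≠ 0 ∧ c ≠ 0 ∧ a ^ 4 = b ^ 4 + c ^ 2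

namespace FermatRightTriangle

variable {a b c : ℕ}

theorem exists_lt_of_not_coprime (h : FermatRightTriangle a b c) (hab : ¬Coprime a b) :
    ∃ a' b' c', a' < a ∧ FermatRightTriangle a' b' c' := by
  obtain ⟨hb, hc, h⟩ := h
  have hg : 2 ≤ Nat.gcd a b := by
    have : 0 < Nat.gcd a b := Nat.gcd_pos_of_pos_right a (Nat.pos_of_ne_zero hb)
    have : Nat.gcd a b ≠ 1 := hab
    omega
  obtain ⟨a', ha'⟩ := Nat.gcd_dvd_left a b
  obtain ⟨b', hb'⟩ := Nat.gcd_dvd_right a b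
  generalize Nat.gcd a b = g at *
  subst ha' hb'
  have hgc : g ^ 2 ∣ c := by
    rw [← Nat.pow_dvd_pow_iff two_ne_zero, ← pow_mul]
    refine (Nat.dvd_add_right (Dvd.intro (b' ^ 4) (mul_pow g b' 4).symm)).mp ?_
    exact h ▸ Dvd.intro (a' ^ 4) (mul_pow g a' 4).symm
  obtain ⟨c', rfl⟩ := hgc
  have ha' : a' ≠ 0 := by
    rintro rfl
    have := pow_pos (Nat.pos_of_ne_zero hb) 4
    rw [mul_zero, zero_pow four_ne_zero] at h
    omega
  refine ⟨a', b', c', lt_mul_left (Nat.pos_of_ne_zero ha') hg, by simp_all, by simp_all, ?_⟩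
  apply Nat.eq_of_mul_eq_mul_left (by positivity : 0 < g ^ 4)
  linear_combination h

theorem coprime_sq (h : FermatRightTriangle a b c) (hab : Coprime a b) : Coprime (b ^ 2) c :=
  Nat.coprime_of_dvd fun p hp hpb hpc ↦ by
    have hpa : p ∣ a := by
      refine hp.dvd_of_dvd_pow (n := 4) (h.2.2 ▸ dvd_add ?_ (dvd_pow hpc two_ne_zero))
      rw [show b ^ 4 = (b ^ 2) ^ 2 by ring]
      exact dvd_pow hpb two_ne_zero
    exact hp.one_lt.ne' (Nat.eq_one_of_dvd_coprimes hab hpa (hp.dvd_of_dvd_pow hpb))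

theorem odd (h : FermatRightTriangle a b c) (hab : Coprime a b) : Odd a := by
  by_contra ha
  have hb : Odd b := Nat.coprime_two_left.mp
    (hab.coprime_dvd_left (even_iff_two_dvd.mp (Nat.not_odd_iff_even.mp ha)))
  have h4 := h.2.2
  rw [show a ^ 4 = (a ^ 2) ^ 2 by ring, show b ^ 4 = (b ^ 2) ^ 2 by ring] at h4
  have := sq_mod_four a; have := sq_mod_four (a ^ 2); have := sq_mod_four b
  have := sq_mod_four (b ^ 2); have := sq_mod_four c
  have := Nat.odd_iff.mp hb
  have := Nat.not_odd_iff.mp ha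
  omega

theorem exists_lt_of_odd (h : FermatRightTriangle a b c) (hab : Coprime a b) (hb : Odd b) :
    ∃ a' b' c', a' < a ∧ FermatRightTriangle a' b' c' := by
  obtain ⟨-, hc, h4⟩ := h
  have hpyth : (b ^ 2) ^ 2 + c ^ 2 = (a ^ 2) ^ 2 := by linear_combination h4.symm
  obtain ⟨m, n, hbm, rfl, ham, -⟩ :=
    pythagorean_coprime_classification hpyth (coprime_sq ⟨hb.pos.ne', hc, h4⟩ hab) hb.pow
  have hn : 0 < n := Nat.pos_of_ne_zero (right_ne_zero_of_mul hc)
  have hma : m ^ 2 < a ^ 2 := by rw [ham]; exact Nat.lt_add_of_pos_right (by positivity)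
  refine ⟨m, n, a * b, (Nat.pow_lt_pow_iff_left two_ne_zero).mp hma, hn.ne', ?_, ?_⟩
  · have : a ≠ 0 := by rintro rfl; omega
    exact mul_ne_zero this hb.pos.ne'
  · linear_combination (m ^ 2 + n ^ 2) * hbm.symm + b ^ 2 * ham.symm

theorem exists_lt_of_sq_eq_pow_four_add_four_mul_pow_four {r s : ℕ}
    (h : a ^ 2 = s ^ 4 + 4 * r ^ 4) (hsr : Coprime (s ^ 2) (2 * r ^ 2)) (hr : r ≠ 0) :
    ∃ a' b', a' < a ∧ FermatRightTriangle a' b' s := by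
  have hs : Odd (s ^ 2) := Nat.coprime_two_right.mp (hsr.coprime_dvd_right (dvd_mul_right 2 _))
  have hpyth : (s ^ 2) ^ 2 + (2 * r ^ 2) ^ 2 = a ^ 2 := by linear_combination h.symm
  obtain ⟨M, N, hsMN, hrMN, rfl, hMN⟩ := pythagorean_coprime_classification hpyth hsr hs
  have hMNr : M * N = r ^ 2 := by linarith
  obtain ⟨γ, rfl⟩ := hMN.exists_eq_pow_of_mul_eq_pow hMNr
  obtain ⟨δ, rfl⟩ := hMN.symm.exists_eq_pow_of_mul_eq_pow ((mul_comm _ _).trans hMNr)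
  have hδ : δ ≠ 0 := by
    rintro rfl
    exact hr (by simpa using hMNr.symm)
  have hs0 : s ≠ 0 := by rintro rfl; simp at hs
  have hγ4 : γ ^ 4 = δ ^ 4 + s ^ 2 := by linear_combination hsMN.symm
  have hγ : 1 < γ := by
    by_contra! hγ
    have : γ ^ 4 ≤ 1 := pow_le_one₀ (Nat.zero_le _) hγ
    have := pow_pos (Nat.pos_of_ne_zero hδ) 4
    have := pow_pos (Nat.pos_of_ne_zero hs0) 2
    omega
  refine ⟨γ, δ, ?_, hδ, hs0, hγ4⟩
  calc γ = γ ^ 1 := (pow_one γ).symm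
    _ < γ ^ 4 := Nat.pow_lt_pow_right hγ (by norm_num)
    _ ≤ (γ ^ 2) ^ 2 + (δ ^ 2) ^ 2 := by rw [← pow_mul]; exact Nat.le_add_right _ _

theorem exists_lt_of_even (h : FermatRightTriangle a b c) (hab : Coprime a b) (hb : Even b) :
    ∃ a' b' c', a' < a ∧ FermatRightTriangle a' b' c' := by
  have h4 := h.2.2
  have ha := h.odd hab
  have hc : Odd c := by
    obtain ⟨b', rfl⟩ := hb.two_dvd
    have h4' : (a ^ 2) ^ 2 = 16 * b' ^ 4 + c ^ 2 := by linear_combination h4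
    have := sq_mod_four a; have := sq_mod_four (a ^ 2); have := sq_mod_four c
    have := Nat.odd_iff.mp ha
    exact Nat.odd_iff.mpr (by omega)
  have hpyth : c ^ 2 + (b ^ 2) ^ 2 = (a ^ 2) ^ 2 := by linear_combination h4.symm
  obtain ⟨m, n, -, hbmn, ham, hmn⟩ :=
    pythagorean_coprime_classification hpyth (coprime_sq h hab).symm hc
  obtain ⟨b', rfl⟩ := hb.two_dvd
  have hmn2 : m * n = 2 * b' ^ 2 := by linarith
  obtain ⟨r, s, hrs, hsr, hr⟩ :
      ∃ r s, a ^ 2 = s ^ 4 + 4 * r ^ 4 ∧ Coprime (s ^ 2) (2 * r ^ 2) ∧ r ≠ 0 := by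
    rcases hmn.exists_pow_of_mul_eq_prime_mul_pow Nat.prime_two hmn2 with
      ⟨r, s, rfl, rfl⟩ | ⟨s, r, rfl, rfl⟩
    · exact ⟨r, s, by rw [ham]; ring, hmn.symm,
        by rintro rfl; apply h.1; simpa using hmn2.symm⟩
    · exact ⟨r, s, by rw [ham]; ring, hmn, by rintro rfl; apply h.1; simpa using hmn2.symm⟩
  obtain ⟨a', b', ha', hT⟩ := exists_lt_of_sq_eq_pow_four_add_four_mul_pow_four hrs hsr hr
  exact ⟨a', b', s, ha', hT⟩

theorem exists_lt (h : FermatRightTriangle a b c) :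
    ∃ a' b' c', a' < a ∧ FermatRightTriangle a' b' c' := by
  by_cases hab : Coprime a b
  · rcases Nat.even_or_odd b with hb | hb
    · exact h.exists_lt_of_even hab hb
    · exact h.exists_lt_of_odd hab hb
  · exact h.exists_lt_of_not_coprime hab

end FermatRightTriangle

theorem not_fermatRightTriangle (a b c : ℕ) : ¬FermatRightTriangle a b c := by
  induction a using Nat.strong_induction_on generalizing b c with
  | _ a ih =>
    intro h
    obtain ⟨a', b', c', ha', h'⟩ := h.exists_lt
    exact ih a' ha' b' c' h'

theorem eq_zero_of_pow_four_eq_two_mul_sq_add_one {t n : ℕ} (h : t ^ 4 = 2 * n ^ 2 + 1) :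
    n = 0 := by
  obtain ⟨j, rfl⟩ : Odd t := (Nat.odd_pow_iff four_ne_zero).mp ⟨n ^ 2, h⟩
  have hn : 4 * (j * (j + 1)) * (2 * (j * (j + 1)) + 1) = n ^ 2 := by linarith
  have hcop : Coprime (4 * (j * (j + 1))) (2 * (j * (j + 1)) + 1) :=
    (coprime_of_mul_eq_mul_add_one (c := 2 * (j * (j + 1)) + 1) (d := j * (j + 1) + 1)
      (by ring)).symm
  obtain ⟨q, hq⟩ := hcop.exists_eq_pow_of_mul_eq_pow hn
  have hq0 : q = 0 :=
    eq_zero_of_sq_add_one_eq_sq (by rw [← hq]; ring : q ^ 2 + 1 = (2 * j + 1) ^ 2)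
  rw [hq, hq0] at hn
  simpa using hn.symm

theorem eq_one_of_pow_four_add_one_eq_two_mul_pow_four {c d : ℕ} (h : c ^ 4 + 1 = 2 * d ^ 4) :
    c = 1 := by
  obtain ⟨E, hE⟩ : Odd (c ^ 4) := ⟨d ^ 4 - 1, by omega⟩
  rcases Nat.eq_zero_or_pos E with rfl | hE0
  · exact Nat.pow_eq_one.mp hE |>.resolve_right four_ne_zero
  have hc : c ≠ 0 := by rintro rfl; simp at hE
  have hd : d ^ 4 = E + 1 := by omega
  refine absurd ⟨hc, hE0.ne', ?_⟩ (not_fermatRightTriangle (d ^ 2) c E)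
  calc (d ^ 2) ^ 4 = (d ^ 4) ^ 2 := by ring
    _ = c ^ 4 + E ^ 2 := by rw [hd, hE]; ring

theorem le_one_of_sq_eq_eight_mul_pow_four_add_one {X r : ℕ} (h : X ^ 2 = 8 * r ^ 4 + 1) :
    r ≤ 1 := by
  obtain ⟨Q, rfl⟩ : Odd X := (Nat.odd_pow_iff two_ne_zero).mp ⟨4 * r ^ 4, by omega⟩
  have hQ : Q * (Q + 1) = 2 * r ^ 4 := by linarith
  rcases (coprime_self_add_one Q).exists_pow_of_mul_eq_prime_mul_pow
    Nat.prime_two hQ with ⟨α, β, hα, hβ⟩ | ⟨α, β, hα, hβ⟩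
  · have hα0 : α ^ 2 = 0 :=
      eq_zero_of_pow_four_eq_two_mul_sq_add_one (t := β) (by rw [← hβ, hα]; ring)
    simp_all
  · have hα1 : α = 1 :=
      eq_one_of_pow_four_add_one_eq_two_mul_pow_four (c := α) (d := β) (by rw [← hα, hβ])
    rw [hα1, one_pow] at hα
    have : r ^ 4 = 1 := by subst hα; linarith
    exact (Nat.pow_eq_one.mp this |>.resolve_right four_ne_zero).le

section ConsecutiveLegs

variable {k v z : ℕ}

theorem eq_zero_of_even_of_sq_add_succ_sq_eq_sq (hk : Even k) (hv : k + 1 = v ^ 2)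
    (hz : k ^ 2 + (k + 1) ^ 2 = z ^ 2) : k = 0 := by
  obtain ⟨m, n, hkmn, rfl, -, -⟩ :=
    pythagorean_coprime_classification (by linear_combination hz : (k + 1) ^ 2 + k ^ 2 = z ^ 2)
      (coprime_self_add_one k).symm hk.add_one
  obtain ⟨w, rfl⟩ : ∃ w, m = n + w := Nat.exists_eq_add_of_le (by nlinarith)
  have hw : w ^ 2 = 2 * n ^ 2 + 1 := by linear_combination hkmn.symm
  have hvw : w * (w + 2 * n) = v ^ 2 := by linear_combination hv + hw
  have hcop : Coprime w (w + 2 * n) := Nat.coprime_self_add_right.mpr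
    (coprime_of_mul_eq_mul_add_one (c := w) (d := n) (by linear_combination hw))
  obtain ⟨t, rfl⟩ := hcop.exists_eq_pow_of_mul_eq_pow hvw
  have hn : n = 0 :=
    eq_zero_of_pow_four_eq_two_mul_sq_add_one (t := t) (by linear_combination hw)
  simp [hn]

theorem eq_three_of_odd_of_sq_add_succ_sq_eq_sq (hk : Odd k) (hv : k + 1 = v ^ 2)
    (hz : k ^ 2 + (k + 1) ^ 2 = z ^ 2) : k = 3 := by
  obtain ⟨m, n, hkmn, hk1, -, hmn⟩ :=
    pythagorean_coprime_classification hz (coprime_self_add_one k) hk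
  have hv2 : Even (v ^ 2) := ⟨m * n, by linarith⟩
  obtain ⟨v', rfl⟩ := ((Nat.even_pow' two_ne_zero).mp hv2).two_dvd
  have hmn2 : m * n = 2 * v' ^ 2 := by linarith
  rcases hmn.exists_pow_of_mul_eq_prime_mul_pow Nat.prime_two hmn2 with
    ⟨r, s, rfl, rfl⟩ | ⟨r, s, rfl, rfl⟩
  · have hr := le_one_of_sq_eq_eight_mul_pow_four_add_one (X := s ^ 2 + 2 * r ^ 2) (r := r)
      (by linear_combination hkmn + hk1.symm)
    interval_cases r
    · simp at hk1
    · rcases s with _ | _ | s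
      · simp at hk1
      · simp at hkmn; omega
      · ring_nf at hkmn; omega
  · have h1 : k + 4 * s ^ 4 = (r ^ 2) ^ 2 := by linear_combination hkmn
    have h2 : k + 1 = 4 * (r ^ 2 * s ^ 2) := by linear_combination hk1
    have := sq_mod_four (r ^ 2)
    -- `(r ^ 2) ^ 2 = k + 4 * s ^ 4 ≡ 3 [MOD 4]`
    omega

end ConsecutiveLegs

theorem stmt14_general (n x y z : ℕ) (hn : 0 < n)
    (h1 : n = 3 * x ^ 2) (h2 : n + 1 = y ^ 2) (h3 : n + 2 = 2 * z ^ 2) :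
    n = 48 := by
  obtain ⟨k, rfl⟩ : Odd y := (Nat.odd_pow_iff two_ne_zero).mp ⟨z ^ 2 - 1, by omega⟩
  obtain ⟨a, rfl⟩ : Even x := by
    have : 3 * x ^ 2 = 4 * (k * (k + 1)) := by linarith
    have := sq_mod_four x
    exact Nat.even_iff.mpr (by omega)
  have hka : k * (k + 1) = 3 * a ^ 2 := by linarith
  have hz : k ^ 2 + (k + 1) ^ 2 = z ^ 2 := by linarith
  rcases (coprime_self_add_one k).exists_pow_of_mul_eq_prime_mul_pow
    Nat.prime_three hka with ⟨r, s, -, hs⟩ | ⟨r, s, hr, hs⟩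
  · rcases Nat.even_or_odd k with hk | hk
    · obtain rfl := eq_zero_of_even_of_sq_add_succ_sq_eq_sq hk hs hz
      omega
    · obtain rfl := eq_three_of_odd_of_sq_add_succ_sq_eq_sq hk hs hz
      omega
  · -- `r ^ 2 + 1 = 3 * s ^ 2` is impossible modulo 3
    have := Nat.pow_mod r 2 3
    have := Nat.mod_lt r (show 3 > 0 by norm_num)
    interval_cases r % 3 <;> omega

theorem stmt14 (n x y z : ℕ) (hn : 0 < n) (hx : 0 < x) (hy : 0 < y) (hz : 0 < z)
    (h1 : n = 3 * x ^ 2) (h2 : n + 1 = y ^ 2) (h3 : n + 2 = 2 * z ^ 2) :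
    n = 48 :=
  stmt14_general n x y z hn h1 h2 h3
end

section
/- n = 9841094 satisfies sfp(9841094) = 134, sfp(9841095) = 55, and sfp(9841096) = 34. -/
/- Squaring does not change the parity of any `p`-adic valuation, and those of a squarefree `d`
are at most `1`, so `v_p d ≤ v_p a` for every prime `p`. -/
theorem Squarefree.dvd_of_mul_sq_eq {d k a m : ℕ} (hd : Squarefree d) (hk : k ≠ 0)
    (h : d * k ^ 2 = a * m ^ 2) : d ∣ a := by
  have hn : a * m ^ 2 ≠ 0 := h ▸ mul_ne_zero hd.ne_zero (pow_ne_zero 2 hk)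
  have ha : a ≠ 0 := left_ne_zero_of_mul hn
  have hm : m ^ 2 ≠ 0 := right_ne_zero_of_mul hn
  rw [← Nat.factorization_le_iff_dvd hd.ne_zero ha]
  intro p
  have hp := congrArg (Nat.factorization · p) h
  simp only [Nat.factorization_mul hd.ne_zero (pow_ne_zero 2 hk), Nat.factorization_mul ha hm,
    Nat.factorization_pow, Finsupp.add_apply, Finsupp.smul_apply, smul_eq_mul] at hp
  have := hd.natFactorization_le_one p
  omega

theorem sfp_mul_sq {d k : ℕ} (hd : Squarefree d) (hk : k ≠ 0) : sfp (d * k ^ 2) = d := by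
  refine IsLeast.csInf_eq ⟨⟨Nat.pos_of_ne_zero hd.ne_zero, dvd_mul_right d _, k, rfl⟩, ?_⟩
  rintro a ⟨ha, -, m, hm⟩
  exact Nat.le_of_dvd ha (hd.dvd_of_mul_sq_eq hk hm)

theorem stmt16 : sfp 9841094 = 134 ∧ sfp 9841095 = 55 ∧ sfp 9841096 = 34 := by
  refine ⟨?_, ?_, ?_⟩
  · have : (9841094 : ℕ) = 134 * 271 ^ 2 := by norm_num
    rw [this, sfp_mul_sq (by decide +kernel) (by norm_num)]
  · have : (9841095 : ℕ) = 55 * 423 ^ 2 := by norm_num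
    rw [this, sfp_mul_sq (by decide +kernel) (by norm_num)]
  · have : (9841096 : ℕ) = 34 * 538 ^ 2 := by norm_num
    rw [this, sfp_mul_sq (by decide +kernel) (by norm_num)]
end
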